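/- Let i, j, c be integers with 2 ≤ c ≤ i and j ≥ i + 2. Then the following identity holds in ℚ(t): P_j·P_{j+c−i}/(P_i·P_{j−i}·P_2·P_{j+c−i−2}) = P_c·P_{j+2}/(P_2·P_{c−2}·P_{i+2}·P_{j−i}) + t^{2(c−1)}·P_{i−c+2}·P_c·P_{j+1}/(P_{i−c+1}·P_{c−1}·P_{i+2}·P_{j−i−1}) + t^{4c}·P_{i−c+2}·P_j/(P_2·P_{i−c}·P_{i+2}·P_{j−i−2}). -/

import Mathlib

open Polynomial

/-- `hpoly α = 1 + t^2 + ⋯ + t^{2α}` for `α ≥ 0`. -/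
noncomputable def hpoly (α : ℤ) : Polynomial ℚ :=
  ∑ m ∈ Finset.range (α.toNat + 1), X ^ (2 * m)

/-- `Ppoly 0 = 1` and `Ppoly α = hpoly 0 ⋯ hpoly (α-1)` for `α > 0`. -/
noncomputable def Ppoly (α : ℤ) : Polynomial ℚ :=
  ∏ m ∈ Finset.range α.toNat, hpoly (m : ℤ)

/-- The image of `hpoly α` in the field of rational functions `ℚ(t)`. -/
noncomputable def hQ (α : ℤ) : RatFunc ℚ :=
  algebraMap (Polynomial ℚ) (RatFunc ℚ) (hpoly α)

/-- The image of `Ppoly α` in the field of rational functions `ℚ(t)`. -/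
noncomputable def PQ (α : ℤ) : RatFunc ℚ :=
  algebraMap (Polynomial ℚ) (RatFunc ℚ) (Ppoly α)

/-- The variable `t` of `ℚ(t)`. -/
noncomputable def tQ : RatFunc ℚ := RatFunc.X

/-! With `q = t²`, `h_m` is the `q`-integer `[m + 1]_q` and `P_n` the `q`-factorial `[n]_q!`.
Writing `c = a + 2`, `i = a + b + 2`, `j = a + b + d + 4`, the four terms share the factor
`[a + b + d + 4]_q! / ([a + b + 4]_q! [d + 2]_q! [2]_q!)`. Dividing it out leaves an identity
between products of at most five `q`-integers, which becomes a polynomial identity in `q` once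
`[n]_q = (q ^ n - 1) / (q - 1)` is substituted. -/

open Finset

section QAnalogues

variable {K : Type*} [Field K] (q : K)

def qInt (n : ℕ) : K := ∑ k ∈ range n, q ^ k

def qFactorial (n : ℕ) : K := ∏ m ∈ range n, qInt q (m + 1)

@[simp]
theorem qInt_one : qInt q 1 = 1 := by simp [qInt]

@[simp]
theorem qFactorial_zero : qFactorial q 0 = 1 := prod_range_zero _

theorem qFactorial_succ (n : ℕ) : qFactorial q (n + 1) = qFactorial q n * qInt q (n + 1) :=
  prod_range_succ _ _

variable {q}

theorem qInt_succ_ne_zero (hq : ¬IsOfFinOrder q) (n : ℕ) : qInt q (n + 1) ≠ 0 := by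
  have hpow : q ^ (n + 1) - 1 ≠ 0 :=
    sub_ne_zero.2 fun h => hq (isOfFinOrder_iff_pow_eq_one.2 ⟨n + 1, n.succ_pos, h⟩)
  rw [← geom_sum_mul] at hpow
  exact left_ne_zero_of_mul hpow

theorem qFactorial_ne_zero (hq : ¬IsOfFinOrder q) (n : ℕ) : qFactorial q n ≠ 0 :=
  prod_ne_zero_iff.2 fun m _ => qInt_succ_ne_zero hq m

theorem qInt_identity (hq : q ≠ 1) (a b d : ℕ) :
    qInt q (a + d + 3) * qInt q (a + d + 4) * (qInt q (a + b + 3) * qInt q (a + b + 4)) =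
      qInt q (a + 1) * qInt q (a + 2) * (qInt q (a + b + d + 5) * qInt q (a + b + d + 6)) +
      q ^ (a + 1) * qInt q 2 * qInt q (a + 2) * qInt q (b + 2) * qInt q (d + 2) *
        qInt q (a + b + d + 5) +
      q ^ (2 * a + 4) * (qInt q (b + 1) * qInt q (b + 2)) * (qInt q (d + 1) * qInt q (d + 2)) := by
  have hq' : q - 1 ≠ 0 := sub_ne_zero.2 hq
  simp only [qInt, geom_sum_eq hq]
  field_simp
  ring

theorem qFactorial_identity (hq : ¬IsOfFinOrder q) (a b d : ℕ) :
    qFactorial q (a + b + d + 4) * qFactorial q (a + d + 4) /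
        (qFactorial q (a + b + 2) * qFactorial q (d + 2) * qFactorial q 2 *
          qFactorial q (a + d + 2)) =
      qFactorial q (a + 2) * qFactorial q (a + b + d + 6) /
        (qFactorial q 2 * qFactorial q a * qFactorial q (a + b + 4) * qFactorial q (d + 2)) +
      q ^ (a + 1) * qFactorial q (b + 2) * qFactorial q (a + 2) * qFactorial q (a + b + d + 5) /
        (qFactorial q (b + 1) * qFactorial q (a + 1) * qFactorial q (a + b + 4) *
          qFactorial q (d + 1)) +
      q ^ (2 * a + 4) * qFactorial q (b + 2) * qFactorial q (a + b + d + 4) /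
        (qFactorial q 2 * qFactorial q b * qFactorial q (a + b + 4) * qFactorial q d) := by
  have hq1 : q ≠ 1 := fun h => hq (h ▸ IsOfFinOrder.one)
  have hF := qFactorial_ne_zero hq
  have hI := qInt_succ_ne_zero hq
  calc _ = qFactorial q (a + b + d + 4) /
          (qFactorial q (a + b + 4) * qFactorial q (d + 2) * qFactorial q 2) *
        (qInt q (a + d + 3) * qInt q (a + d + 4) * (qInt q (a + b + 3) * qInt q (a + b + 4))) := by
        simp only [qFactorial_succ, qFactorial_zero, zero_add, qInt_one, one_mul]
        rw [div_mul_eq_mul_div, div_eq_div_iff (by simp [hF, hI]) (by simp [hF, hI])]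
        ring
    _ = _ := by
        rw [qInt_identity hq1]
        simp only [qFactorial_succ, qFactorial_zero, zero_add, qInt_one, one_mul]
        rw [div_mul_eq_mul_div, div_add_div _ _ (by simp [hF, hI]) (by simp [hF, hI]),
          div_add_div _ _ (by simp [hF, hI]) (by simp [hF, hI]),
          div_eq_div_iff (by simp [hF, hI]) (by simp [hF, hI])]
        ring

end QAnalogues

theorem PQ_eq_qFactorial (α : ℤ) : PQ α = qFactorial (tQ ^ 2) α.toNat := by
  simp only [PQ, Ppoly, hpoly, qFactorial, qInt, tQ, map_prod, map_sum, map_pow,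
    RatFunc.algebraMap_X, Int.toNat_natCast, pow_mul]

theorem not_isOfFinOrder_tQ_sq : ¬IsOfFinOrder (tQ ^ 2) := by
  rw [isOfFinOrder_iff_pow_eq_one]
  rintro ⟨n, hn, h⟩
  rw [tQ, ← pow_mul, ← RatFunc.algebraMap_X, ← map_pow, ← map_one (algebraMap ℚ[X] (RatFunc ℚ)),
    (RatFunc.algebraMap_injective ℚ).eq_iff] at h
  have hdeg := congrArg natDegree h
  rw [natDegree_X_pow, natDegree_one] at hdeg
  omega

/-- Identity (5.3) of the Appendix: the global identity in the case
`k = i + 2`, `l = j + c`, i.e. `2 = k - i ≤ k - c`. -/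
theorem global_identity_case_k_sub_i_eq_two
    (i j c : ℤ) (hc : 2 ≤ c) (hci : c ≤ i) (hj : j ≥ i + 2) :
    PQ j * PQ (j + c - i) / (PQ i * PQ (j - i) * PQ 2 * PQ (j + c - i - 2)) =
      PQ c * PQ (j + 2) / (PQ 2 * PQ (c - 2) * PQ (i + 2) * PQ (j - i)) +
      tQ ^ (2 * (c - 1)).toNat * PQ (i - c + 2) * PQ c * PQ (j + 1) /
        (PQ (i - c + 1) * PQ (c - 1) * PQ (i + 2) * PQ (j - i - 1)) +
      tQ ^ (4 * c).toNat * PQ (i - c + 2) * PQ j /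
        (PQ 2 * PQ (i - c) * PQ (i + 2) * PQ (j - i - 2)) := by
  obtain ⟨a, rfl⟩ : ∃ a : ℕ, c = a + 2 := ⟨(c - 2).toNat, by omega⟩
  obtain ⟨b, rfl⟩ : ∃ b : ℕ, i = a + b + 2 := ⟨(i - a - 2).toNat, by omega⟩
  obtain ⟨d, rfl⟩ : ∃ d : ℕ, j = a + b + d + 4 := ⟨(j - a - b - 4).toNat, by omega⟩
  have h2 : (2 * ((a : ℤ) + 2 - 1)).toNat = 2 * (a + 1) := by omega
  have h4 : (4 * ((a : ℤ) + 2)).toNat = 2 * (2 * a + 4) := by omega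
  simp only [PQ_eq_qFactorial, h2, h4, pow_mul]
  convert qFactorial_identity not_isOfFinOrder_tQ_sq a b d using 10
  all_goals omega
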